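/- The automorphism group of the 3-dimensional algebra T³*₀₅ over ℂ (basis e₁,e₂,e₃ with nonzero products e₁e₁ = e₂, e₁e₂ = e₃) consists exactly of the linear maps whose matrix in the basis (e₁,e₂,e₃) has the form [[x,0,0],[y,x²,0],[z,xy,x³]] with x ≠ 0. -/

import Mathlib

/-- T³*₀₅: basis `e₁,e₂,e₃`, nonzero products `e₁e₁ = e₂`, `e₁e₂ = e₃`. -/
def mulT3s05 (a b : Fin 3 → ℂ) : Fin 3 → ℂ :=
  (a 0 * b 0) • (Pi.single 1 1 : Fin 3 → ℂ) + (a 0 * b 1) • (Pi.single 2 1 : Fin 3 → ℂ)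

/-!
The algebra is generated by `e₁` (here `Pi.single 0 1`), with `e₂ = e₁e₁` and `e₃ = e₁e₂`.
So a multiplicative map with `φ e₁ = x e₁ + y e₂ + z e₃` has `φ e₂ = (φ e₁)² = x² e₂ + xy e₃`
and `φ e₃ = φ e₁ · φ e₂ = x³ e₃`, and `x ≠ 0` because `φ e₂ ≠ 0`. Conversely, since the product
only reads the first two coordinates, the lower triangular matrix `[[x,0,0],[y,x²,0],[z,xy,x³]]`
respects it by direct computation.
-/

open Matrix

theorem mulT3s05_single_zero_single_zero :
    mulT3s05 (Pi.single 0 1) (Pi.single 0 1) = Pi.single 1 1 := by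
  simp [mulT3s05]

theorem mulT3s05_single_zero_single_one :
    mulT3s05 (Pi.single 0 1) (Pi.single 1 1) = Pi.single 2 1 := by
  simp [mulT3s05]

theorem map_single_of_map_mulT3s05 {f : (Fin 3 → ℂ) → Fin 3 → ℂ}
    (hf : ∀ a b, f (mulT3s05 a b) = mulT3s05 (f a) (f b)) {x y z : ℂ}
    (h₀ : f (Pi.single 0 1) = x • Pi.single 0 1 + y • Pi.single 1 1 + z • Pi.single 2 1) :
    f (Pi.single 1 1) = x ^ 2 • Pi.single 1 1 + (x * y) • Pi.single 2 1 ∧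
      f (Pi.single 2 1) = x ^ 3 • Pi.single 2 1 := by
  have h₁ : f (Pi.single 1 1) = x ^ 2 • Pi.single 1 1 + (x * y) • Pi.single 2 1 := by
    rw [← mulT3s05_single_zero_single_zero, hf, h₀]
    simp [mulT3s05, sq]
  refine ⟨h₁, ?_⟩
  rw [← mulT3s05_single_zero_single_one, hf, h₀, h₁]
  simp [mulT3s05, pow_succ, mul_assoc]

def autMatrixT3s05 (x y z : ℂ) : Matrix (Fin 3) (Fin 3) ℂ :=
  !![x, 0, 0; y, x ^ 2, 0; z, x * y, x ^ 3]

theorem autMatrixT3s05_mulVec_mulT3s05 (x y z : ℂ) (a b : Fin 3 → ℂ) :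
    autMatrixT3s05 x y z *ᵥ mulT3s05 a b =
      mulT3s05 (autMatrixT3s05 x y z *ᵥ a) (autMatrixT3s05 x y z *ᵥ b) := by
  ext i; fin_cases i <;> simp [mulT3s05, autMatrixT3s05, mulVec, vecHead, vecTail] <;> ring

theorem eq_toLin'_autMatrixT3s05 (f : (Fin 3 → ℂ) →ₗ[ℂ] Fin 3 → ℂ) {x y z : ℂ}
    (h₀ : f (Pi.single 0 1) = x • Pi.single 0 1 + y • Pi.single 1 1 + z • Pi.single 2 1)
    (h₁ : f (Pi.single 1 1) = x ^ 2 • Pi.single 1 1 + (x * y) • Pi.single 2 1)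
    (h₂ : f (Pi.single 2 1) = x ^ 3 • Pi.single 2 1) :
    f = toLin' (autMatrixT3s05 x y z) := by
  refine (Pi.basisFun ℂ (Fin 3)).ext fun i ↦ ?_
  fin_cases i <;> ext j <;> fin_cases j <;> simp [autMatrixT3s05, h₀, h₁, h₂]

/-- The automorphisms of T³*₀₅ are exactly the linear bijections with matrix
`[[x,0,0],[y,x²,0],[z,xy,x³]]` with `x ≠ 0`. -/
theorem stmt13 (φ : (Fin 3 → ℂ) ≃ₗ[ℂ] (Fin 3 → ℂ)) :
    (∀ a b, φ (mulT3s05 a b) = mulT3s05 (φ a) (φ b)) ↔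
    ∃ x y z : ℂ, x ≠ 0 ∧
      φ (Pi.single 0 1) = x • (Pi.single 0 1 : Fin 3 → ℂ) + y • (Pi.single 1 1 : Fin 3 → ℂ)
        + z • (Pi.single 2 1 : Fin 3 → ℂ) ∧
      φ (Pi.single 1 1) = (x ^ 2) • (Pi.single 1 1 : Fin 3 → ℂ)
        + (x * y) • (Pi.single 2 1 : Fin 3 → ℂ) ∧
      φ (Pi.single 2 1) = (x ^ 3) • (Pi.single 2 1 : Fin 3 → ℂ) := by
  constructor
  · intro hφ
    set u := φ (Pi.single 0 1)
    have h₀ : u = u 0 • Pi.single 0 1 + u 1 • Pi.single 1 1 + u 2 • Pi.single 2 1 := by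
      ext i; fin_cases i <;> simp
    obtain ⟨h₁, h₂⟩ := map_single_of_map_mulT3s05 hφ h₀
    refine ⟨u 0, u 1, u 2, fun hu ↦ ?_, h₀, h₁, h₂⟩
    have he₂ : φ (Pi.single 1 1) = φ 0 := by simp [h₁, hu]
    simpa using φ.injective he₂
  · rintro ⟨x, y, z, -, h₀, h₁, h₂⟩ a b
    have hφ (v : Fin 3 → ℂ) : φ v = autMatrixT3s05 x y z *ᵥ v :=
      LinearMap.congr_fun (eq_toLin'_autMatrixT3s05 φ.toLinearMap h₀ h₁ h₂) v
    simpa only [hφ] using autMatrixT3s05_mulVec_mulT3s05 x y z a b
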